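/- arXiv:0811.3784 — 5 statements merged into one kernel-verified Lean document; each statement's English description precedes it below -/
import Mathlib

section
/- Let z_1, …, z_d ∈ ℂ be distinct, L_0 ∈ Mat_N(ℂ), and a_i, b_i ∈ ℂ^N for 1 ≤ i ≤ d. Define L(w) = L_0 + Σ_{i=1}^d a_i b_iᵀ/(w − z_i). Then for all u, v ∈ ℂ \ {z_1,…,z_d} with u ≠ v: Σ_{i=1}^d [ (a_i b_iᵀ ⊗ I_N)·𝒫 − (I_N ⊗ a_i b_iᵀ)·𝒫 ] / ((u − z_i)(v − z_i)) = (1/(u − v)) · [ 𝒫 , L(u) ⊗ I_N + I_N ⊗ L(v) ], where [X,Y] = XY − YX denotes the matrix commutator. (This expresses that the linear r-matrix Poisson bracket {L(u) ⊗, L(v)} = [r(u−v), L(u)⊗I + I⊗L(v)] with rational r-matrix r(z) = 𝒫/z is induced by the canonical brackets {b_i^l, a_j^s} = δ_{ij} δ_{ls}.) -/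
/-!
Since `𝒫 (A ⊗ B) = (B ⊗ A) 𝒫`, the commutator `[𝒫, X ⊗ I + I ⊗ Y]` is `Φ (Y - X)` for the linear
map `Φ X = (X ⊗ I - I ⊗ X) 𝒫`. As `L(v) - L(u) = Σ_i ((v - z_i)⁻¹ - (u - z_i)⁻¹) a_i b_iᵀ`, both
sides are combinations of the `Φ (a_i b_iᵀ)`, and their coefficients agree by the partial fraction
identity `(u - v)⁻¹ ((v - z)⁻¹ - (u - z)⁻¹) = ((u - z)(v - z))⁻¹`.
-/

open Matrix BigOperators
open scoped Kronecker

noncomputable section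

/-- The permutation matrix `𝒫 = Σ_{i,j} e_{ij} ⊗ e_{ji}` in `Mat_{N²}(ℂ)`. -/
def permMat (N : ℕ) : Matrix (Fin N × Fin N) (Fin N × Fin N) ℂ :=
  ∑ i : Fin N, ∑ j : Fin N,
    (Matrix.single i j (1 : ℂ)) ⊗ₖ (Matrix.single j i (1 : ℂ))

lemma permMat_apply (N : ℕ) (p q r s : Fin N) :
    permMat N (p, q) (r, s) = if p = s ∧ q = r then 1 else 0 := by
  simp only [permMat, Matrix.sum_apply, kronecker_apply, Matrix.single_apply, ite_and]
  split_ifs <;> simp_all [Finset.sum_ite_eq, eq_comm]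

lemma permMat_mul_kronecker (N : ℕ) (A B : Matrix (Fin N) (Fin N) ℂ) :
    permMat N * (A ⊗ₖ B) = (B ⊗ₖ A) * permMat N := by
  ext ⟨p, q⟩ ⟨r, s⟩
  simp [Matrix.mul_apply, Fintype.sum_prod_type, permMat_apply, ite_and, eq_comm, mul_comm]

def permSkew (N : ℕ) :
    Matrix (Fin N) (Fin N) ℂ →ₗ[ℂ] Matrix (Fin N × Fin N) (Fin N × Fin N) ℂ where
  toFun X := (X ⊗ₖ 1 - 1 ⊗ₖ X) * permMat N
  map_add' X Y := by simp only [add_kronecker, kronecker_add]; noncomm_ring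
  map_smul' c X := by
    simp only [smul_kronecker, kronecker_smul, ← smul_sub, Matrix.smul_mul, RingHom.id_apply]

lemma permSkew_apply (N : ℕ) (X : Matrix (Fin N) (Fin N) ℂ) :
    permSkew N X = (X ⊗ₖ 1 - 1 ⊗ₖ X) * permMat N := rfl

lemma permMat_commutator_kronecker_one_add_one_kronecker (N : ℕ)
    (X Y : Matrix (Fin N) (Fin N) ℂ) :
    permMat N * (X ⊗ₖ 1 + 1 ⊗ₖ Y) - (X ⊗ₖ 1 + 1 ⊗ₖ Y) * permMat N = permSkew N (Y - X) := by
  rw [map_sub, permSkew_apply, permSkew_apply, mul_add, permMat_mul_kronecker,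
    permMat_mul_kronecker]
  noncomm_ring

lemma inv_sub_mul_inv_sub_sub_inv_sub {K : Type*} [Field K] {u v z : K}
    (hu : u ≠ z) (hv : v ≠ z) (huv : u ≠ v) :
    (u - v)⁻¹ * ((v - z)⁻¹ - (u - z)⁻¹) = ((u - z) * (v - z))⁻¹ := by
  have := sub_ne_zero.mpr hu
  have := sub_ne_zero.mpr hv
  have := sub_ne_zero.mpr huv
  field_simp
  ring

theorem statement1_general (N d : ℕ) (z : Fin d → ℂ)
    (L₀ : Matrix (Fin N) (Fin N) ℂ) (a b : Fin d → Fin N → ℂ)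
    (L : ℂ → Matrix (Fin N) (Fin N) ℂ)
    (hL : ∀ w, L w = L₀ + ∑ i : Fin d, (w - z i)⁻¹ • Matrix.vecMulVec (a i) (b i))
    (u v : ℂ) (hu : ∀ i, u ≠ z i) (hv : ∀ i, v ≠ z i) (huv : u ≠ v) :
    ∑ i : Fin d, ((u - z i) * (v - z i))⁻¹ •
        (((Matrix.vecMulVec (a i) (b i)) ⊗ₖ (1 : Matrix (Fin N) (Fin N) ℂ)) * permMat N -
          ((1 : Matrix (Fin N) (Fin N) ℂ) ⊗ₖ (Matrix.vecMulVec (a i) (b i))) * permMat N) =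
    (u - v)⁻¹ •
      (permMat N * ((L u) ⊗ₖ (1 : Matrix (Fin N) (Fin N) ℂ) +
          (1 : Matrix (Fin N) (Fin N) ℂ) ⊗ₖ (L v)) -
        ((L u) ⊗ₖ (1 : Matrix (Fin N) (Fin N) ℂ) +
          (1 : Matrix (Fin N) (Fin N) ℂ) ⊗ₖ (L v)) * permMat N) := by
  rw [permMat_commutator_kronecker_one_add_one_kronecker, hL v, hL u, add_sub_add_left_eq_sub,
    ← Finset.sum_sub_distrib, map_sum, Finset.smul_sum]
  refine Finset.sum_congr rfl fun i _ => ?_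
  rw [← sub_smul, map_smul, smul_smul, inv_sub_mul_inv_sub_sub_inv_sub (hu i) (hv i) huv,
    permSkew_apply, Matrix.sub_mul]

/-- for distinct poles `z_1,…,z_d`, the additive Lax matrix
`L(w) = L_0 + Σ_i a_i b_iᵀ/(w − z_i)` satisfies, for `u ≠ v` away from the poles,
`Σ_i [(a_i b_iᵀ ⊗ I)𝒫 − (I ⊗ a_i b_iᵀ)𝒫]/((u−z_i)(v−z_i))
  = (1/(u−v))·[𝒫, L(u) ⊗ I + I ⊗ L(v)]`. -/
theorem statement1 (N d : ℕ) (z : Fin d → ℂ) (hz : Function.Injective z)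
    (L₀ : Matrix (Fin N) (Fin N) ℂ) (a b : Fin d → Fin N → ℂ)
    (L : ℂ → Matrix (Fin N) (Fin N) ℂ)
    (hL : ∀ w, L w = L₀ + ∑ i : Fin d, (w - z i)⁻¹ • Matrix.vecMulVec (a i) (b i))
    (u v : ℂ) (hu : ∀ i, u ≠ z i) (hv : ∀ i, v ≠ z i) (huv : u ≠ v) :
    ∑ i : Fin d, ((u - z i) * (v - z i))⁻¹ •
        (((Matrix.vecMulVec (a i) (b i)) ⊗ₖ (1 : Matrix (Fin N) (Fin N) ℂ)) * permMat N -
          ((1 : Matrix (Fin N) (Fin N) ℂ) ⊗ₖ (Matrix.vecMulVec (a i) (b i))) * permMat N) =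
    (u - v)⁻¹ •
      (permMat N * ((L u) ⊗ₖ (1 : Matrix (Fin N) (Fin N) ℂ) +
          (1 : Matrix (Fin N) (Fin N) ℂ) ⊗ₖ (L v)) -
        ((L u) ⊗ₖ (1 : Matrix (Fin N) (Fin N) ℂ) +
          (1 : Matrix (Fin N) (Fin N) ℂ) ⊗ₖ (L v)) * permMat N) :=
  statement1_general N d z L₀ a b L hL u v hu hv huv

end
end

section
/- Let z_0 ∈ ℂ and p, q ∈ ℂ^N, and define B(w) = I_N + p qᵀ/(w − z_0) for w ≠ z_0. Then for all u, v ∈ ℂ \ {z_0} with u ≠ v: [ (p ⊗ I_N)(I_N ⊗ qᵀ) − (I_N ⊗ p)(qᵀ ⊗ I_N) ] / ((u − z_0)(v − z_0)) = (1/(u − v)) · [ 𝒫 , B(u) ⊗ B(v) ], where [X,Y] = XY − YX. (This says that a single multiplicative factor B satisfies the quadratic r-matrix relation {B(u) ⊗, B(v)} = [r(u−v), B(u) ⊗ B(v)] with rational r-matrix r(z) = 𝒫/z, for the canonical brackets {q^l, p^s} = δ_{ls}.) -/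
open Matrix BigOperators
open scoped Kronecker

noncomputable section

/-- The Kronecker product `a ⊗ M` of a column vector `a ∈ ℂ^N` with an `N×N` matrix. -/
def colKron {N : ℕ} (a : Fin N → ℂ) (M : Matrix (Fin N) (Fin N) ℂ) :
    Matrix (Fin N × Fin N) (Fin N) ℂ :=
  fun ip j => a ip.1 * M ip.2 j

/-- The Kronecker product `M ⊗ a` of an `N×N` matrix with a column vector. -/
def kronCol {N : ℕ} (M : Matrix (Fin N) (Fin N) ℂ) (a : Fin N → ℂ) :
    Matrix (Fin N × Fin N) (Fin N) ℂ :=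
  fun ip j => M ip.1 j * a ip.2

/-- The Kronecker product `bᵀ ⊗ M` of a row vector with an `N×N` matrix. -/
def rowKron {N : ℕ} (b : Fin N → ℂ) (M : Matrix (Fin N) (Fin N) ℂ) :
    Matrix (Fin N) (Fin N × Fin N) ℂ :=
  fun i jq => b jq.1 * M i jq.2

/-- The Kronecker product `M ⊗ bᵀ` of an `N×N` matrix with a row vector. -/
def kronRow {N : ℕ} (M : Matrix (Fin N) (Fin N) ℂ) (b : Fin N → ℂ) :
    Matrix (Fin N) (Fin N × Fin N) ℂ :=
  fun i jq => M i jq.1 * b jq.2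

/-! `𝒫` swaps the two tensor factors, so the commutator `[𝒫, X ⊗ Y]` has entries
`X_{kj} Y_{il} − X_{il} Y_{kj}` at `((i,k),(j,l))`. For `X = 1 + a·pqᵀ` and `Y = 1 + b·pqᵀ` the
constant and the quadratic terms of this expression cancel, leaving `(b − a)` times the entries
`δ_{kj} p_i q_l − δ_{il} p_k q_j` of `(p ⊗ 1)(1 ⊗ qᵀ) − (1 ⊗ p)(qᵀ ⊗ 1)`. With
`a = 1/(u − z₀)` and `b = 1/(v − z₀)` one has `b − a = (u − v)/((u − z₀)(v − z₀))`. -/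

section

variable {N : ℕ}

lemma permMat_apply_s2 (x y : Fin N × Fin N) :
    permMat N x y = if x.1 = y.2 ∧ x.2 = y.1 then 1 else 0 := by
  simp [permMat, Matrix.sum_apply, kroneckerMap_apply, Matrix.single, ite_and]
  aesop

lemma permMat_mul_apply {ι : Type*} (M : Matrix (Fin N × Fin N) ι ℂ) (x : Fin N × Fin N)
    (y : ι) : (permMat N * M) x y = M x.swap y := by
  rw [Matrix.mul_apply, Fintype.sum_prod_type]
  simp [permMat_apply_s2, ite_and, Prod.swap]

lemma mul_permMat_apply {ι : Type*} (M : Matrix ι (Fin N × Fin N) ℂ) (x : ι)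
    (y : Fin N × Fin N) : (M * permMat N) x y = M x y.swap := by
  rw [Matrix.mul_apply, Fintype.sum_prod_type]
  simp [permMat_apply_s2, ite_and, Prod.swap]

lemma permMat_commutator_kronecker_apply (X Y : Matrix (Fin N) (Fin N) ℂ)
    (x y : Fin N × Fin N) :
    (permMat N * (X ⊗ₖ Y) - (X ⊗ₖ Y) * permMat N) x y =
      X x.2 y.1 * Y x.1 y.2 - X x.1 y.2 * Y x.2 y.1 := by
  rw [Matrix.sub_apply, permMat_mul_apply, mul_permMat_apply]
  rfl

lemma colKron_mul_kronRow_apply (a b : Fin N → ℂ) (M M' : Matrix (Fin N) (Fin N) ℂ)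
    (x y : Fin N × Fin N) :
    (colKron a M * kronRow M' b) x y = a x.1 * (M * M') x.2 y.1 * b y.2 := by
  simp only [Matrix.mul_apply, colKron, kronRow, Finset.mul_sum, Finset.sum_mul]
  exact Finset.sum_congr rfl fun _ _ => by ring

lemma kronCol_mul_rowKron_apply (a b : Fin N → ℂ) (M M' : Matrix (Fin N) (Fin N) ℂ)
    (x y : Fin N × Fin N) :
    (kronCol M a * rowKron b M') x y = a x.2 * (M * M') x.1 y.2 * b y.1 := by
  simp only [Matrix.mul_apply, kronCol, rowKron, Finset.mul_sum, Finset.sum_mul]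
  exact Finset.sum_congr rfl fun _ _ => by ring

lemma permMat_commutator_kronecker_one_add_smul_vecMulVec (p q : Fin N → ℂ) (a b : ℂ) :
    permMat N * ((1 + a • vecMulVec p q) ⊗ₖ (1 + b • vecMulVec p q)) -
        ((1 + a • vecMulVec p q) ⊗ₖ (1 + b • vecMulVec p q)) * permMat N =
      (b - a) • (colKron p 1 * kronRow 1 q - kronCol 1 p * rowKron q 1) := by
  ext x y
  rw [permMat_commutator_kronecker_apply, Matrix.smul_apply, Matrix.sub_apply,
    colKron_mul_kronRow_apply, kronCol_mul_rowKron_apply, Matrix.one_mul]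
  simp only [Matrix.add_apply, Matrix.smul_apply, vecMulVec_apply, smul_eq_mul]
  ring

end

/-- for `B(w) = I + p qᵀ/(w − z₀)` and `u ≠ v` away from `z₀`,
`[(p ⊗ I)(I ⊗ qᵀ) − (I ⊗ p)(qᵀ ⊗ I)]/((u−z₀)(v−z₀)) = (1/(u−v))·[𝒫, B(u) ⊗ B(v)]`. -/
theorem statement2 (N : ℕ) (z₀ : ℂ) (p q : Fin N → ℂ)
    (B : ℂ → Matrix (Fin N) (Fin N) ℂ)
    (hB : ∀ w, w ≠ z₀ → B w = 1 + (w - z₀)⁻¹ • Matrix.vecMulVec p q)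
    (u v : ℂ) (hu : u ≠ z₀) (hv : v ≠ z₀) (huv : u ≠ v) :
    ((u - z₀) * (v - z₀))⁻¹ •
        (colKron p 1 * kronRow 1 q - kronCol 1 p * rowKron q 1) =
    (u - v)⁻¹ •
      (permMat N * ((B u) ⊗ₖ (B v)) - ((B u) ⊗ₖ (B v)) * permMat N) := by
  rw [hB u hu, hB v hv, permMat_commutator_kronecker_one_add_smul_vecMulVec, smul_smul]
  congr 1
  have hu' : u - z₀ ≠ 0 := sub_ne_zero.mpr hu
  have hv' : v - z₀ ≠ 0 := sub_ne_zero.mpr hv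
  have huv' : u - v ≠ 0 := sub_ne_zero.mpr huv
  field_simp
  ring

end
end

section
/- Let τ ∈ ℂ with Im τ > 0 and s_0, s_1, s_2, s_3 ∈ ℂ, and let L(z) = s_0 σ_0 + (s_1/(πi)) σ_1 e^{πiz} φ(τ/2, z) + (s_2/(πi)) σ_2 e^{πiz} φ((1+τ)/2, z) + (s_3/(πi)) σ_3 φ(1/2, z) be Sklyanin's Lax matrix. Then for every z ∈ ℂ such that θ11(z|τ), θ11(z+1|τ) and θ11(z+τ|τ) are all nonzero: L(z+1) = σ_3 L(z) σ_3 and L(z+τ) = σ_1 L(z) σ_1. -/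
/-!
Both quasi-periodicities of `θ11` hold term by term: shifting `z` by `1` multiplies every term
by `exp (2πi (n + 1/2)) = -1`, and shifting `z` by `τ` turns the `n`-th term into
`-exp (-πiτ - 2πiz)` times the `(n + 1)`-th. In `φ(w, z)` the factors coming from `θ11(w + z)`
and `θ11(z)` cancel up to `exp (-2πiw)`, so `φ(w, z + 1) = φ(w, z)` and
`φ(w, z + τ) = exp (-2πiw) φ(w, z)`. Together with `exp (πiz)` this multiplies the coefficients
of `σ₀, σ₁, σ₂, σ₃` in `L` by `(1, -1, -1, 1)` under `z ↦ z + 1` and by `(1, 1, -1, -1)` under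
`z ↦ z + τ`, which is exactly conjugation by `σ₃`, resp. `σ₁`.
-/

open Complex Matrix

noncomputable section

/-- The Jacobi theta function `θ11(z|τ)`. -/
def θ11 (τ z : ℂ) : ℂ :=
  ∑' n : ℤ, Complex.exp ((Real.pi : ℂ) * I * ((n : ℂ) + 1/2) ^ 2 * τ +
    2 * (Real.pi : ℂ) * I * ((n : ℂ) + 1/2) * (z + 1/2))

/-- `θ'11`, the `z`-derivative of `θ11(z|τ)` at `z = 0`. -/
def θ11' (τ : ℂ) : ℂ := deriv (θ11 τ) 0

/-- `φ(w,z) = θ11(w+z|τ) θ'11 / (θ11(w|τ) θ11(z|τ))`. -/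
def phi (τ w z : ℂ) : ℂ := θ11 τ (w + z) * θ11' τ / (θ11 τ w * θ11 τ z)

/-- Pauli matrix σ₁. -/
def σ1 : Matrix (Fin 2) (Fin 2) ℂ := !![0, 1; 1, 0]
/-- Pauli matrix σ₂. -/
def σ2 : Matrix (Fin 2) (Fin 2) ℂ := !![0, -I; I, 0]
/-- Pauli matrix σ₃. -/
def σ3 : Matrix (Fin 2) (Fin 2) ℂ := !![1, 0; 0, -1]
/-- σ₀ = I₂. -/
def σ0 : Matrix (Fin 2) (Fin 2) ℂ := 1

/-- Sklyanin's single-pole Lax matrix. -/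
def sklyaninLax (τ s₀ s₁ s₂ s₃ z : ℂ) : Matrix (Fin 2) (Fin 2) ℂ :=
  s₀ • σ0 +
  (s₁ / ((Real.pi : ℂ) * I) * Complex.exp ((Real.pi : ℂ) * I * z) * phi τ (τ / 2) z) • σ1 +
  (s₂ / ((Real.pi : ℂ) * I) * Complex.exp ((Real.pi : ℂ) * I * z) * phi τ ((1 + τ) / 2) z) • σ2 +
  (s₃ / ((Real.pi : ℂ) * I) * phi τ (1 / 2) z) • σ3

open scoped Real

theorem θ11_add_one (τ z : ℂ) : θ11 τ (z + 1) = -θ11 τ z := by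
  rw [θ11, θ11, ← tsum_neg]
  refine tsum_congr fun n => ?_
  rw [show (π : ℂ) * I * ((n : ℂ) + 1/2) ^ 2 * τ + 2 * π * I * ((n : ℂ) + 1/2) * (z + 1 + 1/2)
      = (π * I * ((n : ℂ) + 1/2) ^ 2 * τ + 2 * π * I * ((n : ℂ) + 1/2) * (z + 1/2)
        + n * (2 * π * I)) + π * I by ring,
    exp_add_pi_mul_I, exp_add, exp_int_mul_two_pi_mul_I, mul_one]

theorem θ11_add_tau (τ z : ℂ) :
    θ11 τ (z + τ) = -exp (-(π * I * τ) - 2 * π * I * z) * θ11 τ z := by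
  rw [θ11, θ11, ← tsum_mul_left]
  conv_rhs => rw [← (Equiv.addRight (1 : ℤ)).tsum_eq]
  refine tsum_congr fun n => ?_
  rw [Equiv.coe_addRight, show (π : ℂ) * I * ((n : ℂ) + 1/2) ^ 2 * τ
        + 2 * π * I * ((n : ℂ) + 1/2) * (z + τ + 1/2)
      = (-(π * I * τ) - 2 * π * I * z + (π * I * ((↑(n + 1) : ℂ) + 1/2) ^ 2 * τ
        + 2 * π * I * ((↑(n + 1) : ℂ) + 1/2) * (z + 1/2))) - π * I by push_cast; ring,
    exp_sub_pi_mul_I, exp_add, neg_mul]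

theorem phi_add_one (τ w z : ℂ) : phi τ w (z + 1) = phi τ w z := by
  rw [phi, phi, ← add_assoc, θ11_add_one, θ11_add_one, neg_mul, mul_neg, neg_div_neg_eq]

theorem phi_add_tau (τ w z : ℂ) :
    phi τ w (z + τ) = exp (-(2 * π * I * w)) * phi τ w z := by
  have hsplit : exp (-(π * I * τ) - 2 * π * I * (w + z))
      = exp (-(2 * π * I * w)) * exp (-(π * I * τ) - 2 * π * I * z) := by
    rw [← exp_add]; ring_nf
  rw [phi, phi, ← add_assoc, θ11_add_tau, θ11_add_tau, hsplit]
  field_simp [exp_ne_zero]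

theorem exp_mul_phi_add_tau (τ w z : ℂ) :
    exp (π * I * (z + τ)) * phi τ w (z + τ)
      = exp (π * I * (τ - 2 * w)) * (exp (π * I * z) * phi τ w z) := by
  rw [phi_add_tau, ← mul_assoc, ← mul_assoc, ← exp_add, ← exp_add]
  ring_nf

theorem σ3_mul_pauli_mul_σ3 (a b c d : ℂ) :
    σ3 * (a • σ0 + b • σ1 + c • σ2 + d • σ3) * σ3 = a • σ0 + (-b) • σ1 + (-c) • σ2 + d • σ3 := by
  ext i j
  fin_cases i <;> fin_cases j <;>
    simp [σ0, σ1, σ2, σ3, mul_apply, vecMul, dotProduct, Fin.sum_univ_two, one_apply] <;> ring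

theorem σ1_mul_pauli_mul_σ1 (a b c d : ℂ) :
    σ1 * (a • σ0 + b • σ1 + c • σ2 + d • σ3) * σ1 = a • σ0 + b • σ1 + (-c) • σ2 + (-d) • σ3 := by
  ext i j
  fin_cases i <;> fin_cases j <;>
    simp [σ0, σ1, σ2, σ3, mul_apply, vecMul, dotProduct, Fin.sum_univ_two, one_apply]

theorem statement7_general (τ : ℂ) (s₀ s₁ s₂ s₃ : ℂ) (z : ℂ) :
    sklyaninLax τ s₀ s₁ s₂ s₃ (z + 1) = σ3 * sklyaninLax τ s₀ s₁ s₂ s₃ z * σ3 ∧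
    sklyaninLax τ s₀ s₁ s₂ s₃ (z + τ) = σ1 * sklyaninLax τ s₀ s₁ s₂ s₃ z * σ1 := by
  have hτ₁ : exp (π * I * (τ - 2 * (τ / 2))) = 1 := by
    rw [show τ - 2 * (τ / 2) = 0 by ring, mul_zero, exp_zero]
  have hτ₂ : exp (π * I * (τ - 2 * ((1 + τ) / 2))) = -1 := by
    rw [show (π : ℂ) * I * (τ - 2 * ((1 + τ) / 2)) = -(π * I) by ring, exp_neg_pi_mul_I]
  have hhalf : exp (-(2 * π * I * (1 / 2))) = -1 := by
    rw [show -(2 * (π : ℂ) * I * (1 / 2)) = -(π * I) by ring, exp_neg_pi_mul_I]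
  constructor
  · simp only [sklyaninLax, σ3_mul_pauli_mul_σ3, phi_add_one, mul_add_one, exp_add_pi_mul_I,
      mul_neg, neg_mul]
  · rw [sklyaninLax, sklyaninLax, σ1_mul_pauli_mul_σ1, mul_assoc (s₁ / _), mul_assoc (s₂ / _),
      exp_mul_phi_add_tau, exp_mul_phi_add_tau, hτ₁, hτ₂, phi_add_tau, hhalf]
    simp only [one_mul, neg_one_mul, mul_neg, mul_assoc]

/-- monodromy properties of Sklyanin's Lax matrix:
`L(z+1) = σ₃ L(z) σ₃` and `L(z+τ) = σ₁ L(z) σ₁`. -/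
theorem statement7 (τ : ℂ) (hτ : 0 < τ.im) (s₀ s₁ s₂ s₃ : ℂ) (z : ℂ)
    (h1 : θ11 τ z ≠ 0) (h2 : θ11 τ (z + 1) ≠ 0) (h3 : θ11 τ (z + τ) ≠ 0) :
    sklyaninLax τ s₀ s₁ s₂ s₃ (z + 1) = σ3 * sklyaninLax τ s₀ s₁ s₂ s₃ z * σ3 ∧
    sklyaninLax τ s₀ s₁ s₂ s₃ (z + τ) = σ1 * sklyaninLax τ s₀ s₁ s₂ s₃ z * σ1 :=
  statement7_general τ s₀ s₁ s₂ s₃ z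

end
end

section
/- Let a, b, c ∈ ℂ. On ℂ⁴ with coordinates s_0, s_1, s_2, s_3, define the antisymmetric structure functions of the quadratic bracket family by: P(s_0,s_1) = −b s_2 s_3, P(s_0,s_2) = a s_1 s_3, P(s_0,s_3) = −c s_1 s_2, P(s_1,s_2) = −s_0 s_3, P(s_1,s_3) = s_0 s_2, P(s_2,s_3) = −s_0 s_1. Then the Jacobi identity — for all indices i, j, k ∈ {0,1,2,3} and all points p ∈ ℂ⁴, Σ_{l=0}^{3} [ P_{il}(p) ∂P_{jk}/∂s_l(p) + P_{jl}(p) ∂P_{ki}/∂s_l(p) + P_{kl}(p) ∂P_{ij}/∂s_l(p) ] = 0 — holds if and only if a = b + c. -/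
/-!
For antisymmetric structure functions the Jacobiator `J(i,j,k)` is invariant under cyclic
permutations and changes sign under a transposition, so it vanishes identically as soon as it
vanishes on the strictly increasing triples. For the quadratic family a direct computation on these
four triples gives `J(i,j,k) = (a - b - c) (-1)^(i+j+k) s_i s_j s_k`, which vanishes identically
exactly when `a = b + c`.
-/

open BigOperators

noncomputable section

/-- Partial derivative of `f : ℂⁿ → ℂ` in the `l`-th coordinate at the point `p`. -/
def pderiv' {n : ℕ} (l : Fin n) (f : (Fin n → ℂ) → ℂ) (p : Fin n → ℂ) : ℂ :=
  deriv (fun t => f (Function.update p l t)) (p l)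

/-- Antisymmetric structure functions of the quadratic bracket family on ℂ⁴,
coordinates `s₀, s₁, s₂, s₃`. -/
def Pquad (a b c : ℂ) (i j : Fin 4) (s : Fin 4 → ℂ) : ℂ :=
  !![0,              -b * s 2 * s 3, a * s 1 * s 3, -c * s 1 * s 2;
     b * s 2 * s 3,  0,              -(s 0) * s 3,  (s 0) * s 2;
     -a * s 1 * s 3, (s 0) * s 3,    0,             -(s 0) * s 1;
     c * s 1 * s 2,  -(s 0) * s 2,   (s 0) * s 1,   0] i j

section PartialDerivative

variable {n : ℕ} (l : Fin n) (p : Fin n → ℂ)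

theorem pderiv'_neg (f : (Fin n → ℂ) → ℂ) :
    pderiv' l (fun s => -f s) p = -pderiv' l f p :=
  deriv.neg

theorem pderiv'_const_mul (κ : ℂ) (f : (Fin n → ℂ) → ℂ) :
    pderiv' l (fun s => κ * f s) p = κ * pderiv' l f p :=
  deriv_const_mul_field κ

theorem pderiv'_coord_mul_coord (m m' : Fin n) :
    pderiv' l (fun s => s m * s m') p =
      (Pi.single l 1 : Fin n → ℂ) m * p m' + p m * (Pi.single l 1 : Fin n → ℂ) m' := by
  have hcoord := hasDerivAt_pi.mp (hasDerivAt_update p l (p l))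
  have h := (hcoord m).mul (hcoord m')
  rw [Function.update_eq_self] at h
  exact h.deriv

end PartialDerivative

theorem eq_zero_of_alternating_of_lt {α M : Type*} [LinearOrder α] [AddCommGroup M]
    (f : α → α → α → M) (hcycle : ∀ i j k, f i j k = f j k i)
    (hswap : ∀ i j k, f j i k = -f i j k) (hdiag : ∀ i k, f i i k = 0)
    (hlt : ∀ i j k, i < j → j < k → f i j k = 0) (i j k : α) : f i j k = 0 := by
  rcases lt_trichotomy i j with hij | hij | hij <;>
    rcases lt_trichotomy j k with hjk | hjk | hjk <;>
    rcases lt_trichotomy i k with hik | hik | hik <;>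
    grind

section Jacobiator

variable {n : ℕ} (P : Fin n → Fin n → (Fin n → ℂ) → ℂ)

noncomputable def jacobiator (i j k : Fin n) (p : Fin n → ℂ) : ℂ :=
  ∑ l, (P i l p * pderiv' l (P j k) p + P j l p * pderiv' l (P k i) p +
    P k l p * pderiv' l (P i j) p)

theorem jacobiator_cycle (i j k : Fin n) (p : Fin n → ℂ) :
    jacobiator P i j k p = jacobiator P j k i p :=
  Finset.sum_congr rfl fun _ _ => by ring

variable {P}

theorem jacobiator_swap (hP : ∀ i j, P j i = -P i j) (i j k : Fin n) (p : Fin n → ℂ) :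
    jacobiator P j i k p = -jacobiator P i j k p := by
  simp only [jacobiator, hP k i, hP j k, hP i j, Pi.neg_def, pderiv'_neg,
    ← Finset.sum_neg_distrib]
  exact Finset.sum_congr rfl fun _ _ => by ring

theorem jacobiator_self_left (hP : ∀ i j, P j i = -P i j) (i k : Fin n) (p : Fin n → ℂ) :
    jacobiator P i i k p = 0 :=
  self_eq_neg.mp (jacobiator_swap hP i i k p)

theorem jacobiator_eq_zero_of_lt (hP : ∀ i j, P j i = -P i j) (p : Fin n → ℂ)
    (hlt : ∀ i j k, i < j → j < k → jacobiator P i j k p = 0) (i j k : Fin n) :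
    jacobiator P i j k p = 0 :=
  eq_zero_of_alternating_of_lt (jacobiator P · · · p) (fun i j k => jacobiator_cycle P i j k p)
    (fun i j k => jacobiator_swap hP i j k p) (fun i k => jacobiator_self_left hP i k p)
    hlt i j k

end Jacobiator

theorem Pquad_swap (a b c : ℂ) (i j : Fin 4) : Pquad a b c j i = -Pquad a b c i j := by
  funext s
  fin_cases i <;> fin_cases j <;> simp [Pquad]

theorem jacobiator_Pquad_of_lt (a b c : ℂ) {i j k : Fin 4} (p : Fin 4 → ℂ) (hij : i < j)
    (hjk : j < k) :
    jacobiator (Pquad a b c) i j k p =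
      (a - b - c) * (-1) ^ (i.val + j.val + k.val) * (p i * p j * p k) := by
  fin_cases i <;> fin_cases j <;> fin_cases k <;> simp at hij hjk <;>
    simp [jacobiator, Fin.sum_univ_four, Pquad.eq_unfold, mul_assoc, pderiv'_neg, pderiv'_const_mul,
      pderiv'_coord_mul_coord] <;> ring

/-- the quadratic bracket family on ℂ⁴ satisfies the Jacobi
identity if and only if `a = b + c`. -/
theorem statement12 (a b c : ℂ) :
    (∀ (i j k : Fin 4) (p : Fin 4 → ℂ),
      ∑ l : Fin 4,
        (Pquad a b c i l p * pderiv' l (Pquad a b c j k) p +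
         Pquad a b c j l p * pderiv' l (Pquad a b c k i) p +
         Pquad a b c k l p * pderiv' l (Pquad a b c i j) p) = 0) ↔ a = b + c := by
  refine ⟨fun hJ => ?_, fun habc i j k p => ?_⟩
  · have h012 := (jacobiator_Pquad_of_lt a b c (fun _ => 1) (by decide : (0 : Fin 4) < 1)
      (by decide : (1 : Fin 4) < 2)).symm.trans (hJ 0 1 2 fun _ => 1)
    norm_num at h012
    linear_combination -h012
  · refine jacobiator_eq_zero_of_lt (Pquad_swap a b c) p (fun i j k hij hjk => ?_) i j k
    rw [jacobiator_Pquad_of_lt a b c p hij hjk, habc]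
    ring

end
end

section
/- Let a, b, c ∈ ℂ with a = b + c, and let P_{ij} be the quadratic Sklyanin structure functions on ℂ⁴: P(s_0,s_1) = −b s_2 s_3, P(s_0,s_2) = a s_1 s_3, P(s_0,s_3) = −c s_1 s_2, P(s_1,s_2) = −s_0 s_3, P(s_1,s_3) = s_0 s_2, P(s_2,s_3) = −s_0 s_1 (extended antisymmetrically). Then the polynomials K_0 = s_1² + s_2² + s_3² and K_1 = s_0² + a s_1² + b s_2² are Casimir functions: for every index i ∈ {0,1,2,3} and every point p ∈ ℂ⁴, Σ_{l=0}^{3} (∂K_0/∂s_l)(p) · P_{li}(p) = 0 and Σ_{l=0}^{3} (∂K_1/∂s_l)(p) · P_{li}(p) = 0. (These two Casimirs cut out the two-dimensional symplectic leaves of Sklyanin's quadratic bracket.) -/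
/-!
Both `K₀` and `K₁` are diagonal quadratic forms `∑ₗ wₗ sₗ²`, so the Casimir condition for
them reads `∑ₗ wₗ sₗ P_{li} = 0`. Each such sum is a cubic monomial identity; the only
cases that do not cancel termwise (`K₀` at `i = 0`, `K₁` at `i = 3`) reduce to `a = b + c`.
-/

open BigOperators

noncomputable section

/-- `K₀ = s₁² + s₂² + s₃²`. -/
def K0 (s : Fin 4 → ℂ) : ℂ := (s 1) ^ 2 + (s 2) ^ 2 + (s 3) ^ 2

/-- `K₁ = s₀² + a s₁² + b s₂²`. -/
def K1 (a b : ℂ) (s : Fin 4 → ℂ) : ℂ := (s 0) ^ 2 + a * (s 1) ^ 2 + b * (s 2) ^ 2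

def IsCasimir {n : ℕ} (P : Fin n → Fin n → (Fin n → ℂ) → ℂ) (K : (Fin n → ℂ) → ℂ) : Prop :=
  ∀ i p, ∑ l, pderiv' l K p * P l i p = 0

def diagQuad {n : ℕ} (w : Fin n → ℂ) (s : Fin n → ℂ) : ℂ := ∑ k, w k * s k ^ 2

theorem hasDerivAt_diagQuad_update {n : ℕ} (w p : Fin n → ℂ) (l : Fin n) :
    HasDerivAt (fun t => diagQuad w (Function.update p l t)) (2 * w l * p l) (p l) := by
  have hterm (k : Fin n) : HasDerivAt (fun t => w k * Function.update p l t k ^ 2)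
      (if k = l then 2 * w l * p l else 0) (p l) := by
    by_cases hk : k = l
    · subst hk
      simp only [Function.update_self, if_true]
      exact ((hasDerivAt_pow 2 (p k)).const_mul (w k)).congr_deriv (by norm_num; ring)
    · simp only [Function.update_of_ne hk, if_neg hk]
      exact hasDerivAt_const _ _
  simpa [diagQuad] using HasDerivAt.fun_sum (u := Finset.univ) fun k _ => hterm k

theorem pderiv'_diagQuad {n : ℕ} (w p : Fin n → ℂ) (l : Fin n) :
    pderiv' l (diagQuad w) p = 2 * w l * p l :=
  (hasDerivAt_diagQuad_update w p l).deriv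

theorem isCasimir_diagQuad_iff {n : ℕ} (P : Fin n → Fin n → (Fin n → ℂ) → ℂ) (w : Fin n → ℂ) :
    IsCasimir P (diagQuad w) ↔ ∀ i p, ∑ l, w l * p l * P l i p = 0 := by
  simp only [IsCasimir, pderiv'_diagQuad, mul_assoc, ← Finset.mul_sum]
  simp

theorem K0_eq_diagQuad : K0 = diagQuad ![0, 1, 1, 1] := by
  funext s
  simp [K0, diagQuad, Fin.sum_univ_four]

theorem K1_eq_diagQuad (a b : ℂ) : K1 a b = diagQuad ![1, a, b, 0] := by
  funext s
  simp [K1, diagQuad, Fin.sum_univ_four]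

theorem isCasimir_Pquad_K0 (a b c : ℂ) (habc : a = b + c) : IsCasimir (Pquad a b c) K0 := by
  subst habc
  rw [K0_eq_diagQuad, isCasimir_diagQuad_iff]
  intro i p
  fin_cases i <;> simp [Fin.sum_univ_four, Pquad] <;> ring

theorem isCasimir_Pquad_K1 (a b c : ℂ) (habc : a = b + c) : IsCasimir (Pquad a b c) (K1 a b) := by
  subst habc
  rw [K1_eq_diagQuad, isCasimir_diagQuad_iff]
  intro i p
  fin_cases i <;> simp [Fin.sum_univ_four, Pquad] <;> ring

/-- for `a = b + c`, the polynomials `K₀ = s₁²+s₂²+s₃²` and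
`K₁ = s₀² + a s₁² + b s₂²` are Casimir functions of the quadratic Sklyanin bracket. -/
theorem statement14 (a b c : ℂ) (habc : a = b + c) :
    ∀ (i : Fin 4) (p : Fin 4 → ℂ),
      (∑ l : Fin 4, pderiv' l K0 p * Pquad a b c l i p) = 0 ∧
      (∑ l : Fin 4, pderiv' l (K1 a b) p * Pquad a b c l i p) = 0 :=
  fun i p => ⟨isCasimir_Pquad_K0 a b c habc i p, isCasimir_Pquad_K1 a b c habc i p⟩

end
end
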